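/- arXiv:2601.18964 — 6 statements merged into one kernel-verified Lean document; each statement's English description precedes it below -/
import Mathlib

section
/- Let A be an n×n real symmetric matrix, let θ ∈ ℝ, and let E be the orthogonal spectral projection of A for θ (i.e., E is real symmetric, E·E = E, and for every vector v one has A·v = θ·v ↔ E·v = v). If for some index u the diagonal entry satisfies E_{u,u} > 1/2, then for every real t, |exp(itA)_{u,u}| ≥ 2·E_{u,u} − 1; in particular u is sedentary. -/
open Matrix
open scoped Kronecker

/-- Transition matrix `U(t) = exp(itA)` of the continuous-time quantum walk on the
weighted graph with real symmetric adjacency matrix `A`. -/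
noncomputable def transition {m : Type*} [Fintype m] [DecidableEq m]
    (A : Matrix m m ℝ) (t : ℝ) : Matrix m m ℂ :=
  NormedSpace.exp ((Complex.I * t) • A.map (fun x : ℝ => (x : ℂ)))

/-- A vertex `u` is sedentary if `inf_{t>0} |U(t)_{u,u}| > 0`. -/
noncomputable def Sedentary {m : Type*} [Fintype m] [DecidableEq m]
    (A : Matrix m m ℝ) (u : m) : Prop :=
  0 < ⨅ t : {t : ℝ // 0 < t}, ‖transition A t u u‖

/-- `E` is the orthogonal spectral projection of `A` for the eigenvalue `θ`:
`E` is real symmetric, idempotent, and for every vector `v`, `A·v = θ·v ↔ E·v = v`. -/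
def IsSpectralProj {m : Type*} [Fintype m] [DecidableEq m]
    (A : Matrix m m ℝ) (θ : ℝ) (E : Matrix m m ℝ) : Prop :=
  E.IsSymm ∧ E * E = E ∧ ∀ v : m → ℝ, A.mulVec v = θ • v ↔ E.mulVec v = v

/-! Since `A E = θ E = E A`, the unitary `U = exp(itA)` satisfies `U E = e^{itθ} E` and commutes
with `P = 1 - E`. Hence `U_{uu} = e^{itθ} E_{uu} + (P U P)_{uu}`, and Cauchy–Schwarz together with
`‖U P e_u‖ = ‖P e_u‖` gives `|(P U P)_{uu}| ≤ ‖P e_u‖² = P_{uu} = 1 - E_{uu}`. -/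

open NormedSpace

theorem NormedSpace.exp_mul_of_mul_eq_smul {𝕂 𝔸 : Type*} [RCLike 𝕂] [NormedRing 𝔸]
    [NormedAlgebra ℚ 𝔸] [NormedAlgebra 𝕂 𝔸] [CompleteSpace 𝔸] {a f : 𝔸} {c : 𝕂}
    (h : a * f = c • f) : exp a * f = exp c • f := by
  have hsemi : SemiconjBy f (algebraMap 𝕂 𝔸 c) a := by
    rw [SemiconjBy, h, Algebra.algebraMap_eq_smul_one, mul_smul_one]
  rw [← hsemi.exp_right, ← algebraMap_exp_comm, Algebra.algebraMap_eq_smul_one, mul_smul_one]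

theorem Matrix.exp_mul_of_mul_eq_smul {m 𝕂 : Type*} [Fintype m] [DecidableEq m] [RCLike 𝕂]
    {M F : Matrix m m 𝕂} {c : 𝕂} (h : M * F = c • F) : exp M * F = exp c • F :=
  open scoped Matrix.Norms.Operator in NormedSpace.exp_mul_of_mul_eq_smul h

theorem Matrix.exp_mem_unitaryGroup {m 𝕂 : Type*} [Fintype m] [DecidableEq m] [RCLike 𝕂]
    {M : Matrix m m 𝕂} (h : M ∈ skewAdjoint (Matrix m m 𝕂)) : exp M ∈ unitaryGroup m 𝕂 := by
  rw [Unitary.mem_iff, star_eq_conjTranspose, ← exp_conjTranspose, ← star_eq_conjTranspose,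
    skewAdjoint.mem_iff.mp h, ← exp_add_of_commute _ _ (Commute.refl M).neg_left,
    ← exp_add_of_commute _ _ (Commute.refl M).neg_right, neg_add_cancel, add_neg_cancel,
    exp_zero, and_self]

theorem Matrix.norm_conjTranspose_mul_mul_apply_self_le {m 𝕂 : Type*} [Fintype m] [DecidableEq m]
    [RCLike 𝕂] {U : Matrix m m 𝕂} (hU : U ∈ unitaryGroup m 𝕂) (P : Matrix m m 𝕂) (i : m) :
    ‖(Pᴴ * U * P) i i‖ ≤ RCLike.re ((Pᴴ * P) i i) := by
  set x : EuclideanSpace 𝕂 m := WithLp.toLp 2 (fun j => P j i)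
  have hUx : ‖toEuclideanCLM (𝕜 := 𝕂) U x‖ = ‖x‖ :=
    ContinuousLinearMap.norm_map_of_mem_unitary (Unitary.map_mem _ hU) x
  have hPUP : (Pᴴ * U * P) i i = inner 𝕂 x (toEuclideanCLM (𝕜 := 𝕂) U x) := by
    rw [toEuclideanCLM_toLp, EuclideanSpace.inner_toLp_toLp]
    simp only [Matrix.mul_apply, dotProduct, mulVec, Finset.sum_mul, conjTranspose_apply,
      Pi.star_apply, RCLike.star_def]
    rw [Finset.sum_comm]
    exact Finset.sum_congr rfl fun _ _ => Finset.sum_congr rfl fun _ _ => by ring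
  have hPP : (Pᴴ * P) i i = inner 𝕂 x x := by
    rw [EuclideanSpace.inner_toLp_toLp]
    simp [Matrix.mul_apply, dotProduct, mul_comm]
  rw [hPUP, hPP, inner_self_eq_norm_sq]
  calc _ ≤ ‖x‖ * ‖toEuclideanCLM (𝕜 := 𝕂) U x‖ := norm_inner_le_norm _ _
    _ = ‖x‖ ^ 2 := by rw [hUx, sq]

theorem Matrix.two_mul_re_sub_one_le_norm_apply_self {m 𝕂 : Type*} [Fintype m] [DecidableEq m]
    [RCLike 𝕂] {U F : Matrix m m 𝕂} {z : 𝕂} (hU : U ∈ unitaryGroup m 𝕂) (hF : F.IsHermitian)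
    (hFF : F * F = F) (hUF : U * F = z • F) (hcomm : Commute U F) (hz : ‖z‖ = 1) (i : m) :
    2 * RCLike.re (F i i) - 1 ≤ ‖U i i‖ := by
  set P := 1 - F
  have hPH : Pᴴ = P := by simp [P, hF.eq]
  have hPP : P * P = P := by simp [P, sub_mul, mul_sub, hFF]
  have hPUP : Pᴴ * U * P = U * P := by
    have hUP : U * P = P * U := ((Commute.one_right U).sub_right hcomm).eq
    rw [hPH, Matrix.mul_assoc, hUP, ← Matrix.mul_assoc, hPP]
  have hsplit : U i i = z * F i i + (U * P) i i := by
    rw [← smul_eq_mul, ← smul_apply, ← hUF, ← add_apply, ← Matrix.mul_add, add_sub_cancel,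
      Matrix.mul_one]
  have hUP : ‖(U * P) i i‖ ≤ 1 - RCLike.re (F i i) := by
    have hPii : P i i = 1 - F i i := by simp [P]
    have := norm_conjTranspose_mul_mul_apply_self_le hU P i
    rwa [hPUP, hPH, hPP, hPii, map_sub, RCLike.one_re] at this
  have hzF : RCLike.re (F i i) ≤ ‖U i i - (U * P) i i‖ := by
    rw [hsplit, add_sub_cancel_right, norm_mul, hz, one_mul]
    exact RCLike.re_le_norm _
  linarith [norm_sub_le (U i i) ((U * P) i i)]

section SpectralProj

variable {m : Type*} [Fintype m] [DecidableEq m] {A E : Matrix m m ℝ} {θ : ℝ}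

theorem IsSpectralProj.mul_eq_smul (hE : IsSpectralProj A θ E) : A * E = θ • E := by
  obtain ⟨-, hEE, hfix⟩ := hE
  refine ext_iff_mulVec.mpr fun v => ?_
  have : E *ᵥ (E *ᵥ v) = E *ᵥ v := by rw [mulVec_mulVec, hEE]
  rw [← mulVec_mulVec, (hfix _).mpr this, smul_mulVec]

theorem IsSpectralProj.commute (hA : A.IsSymm) (hE : IsSpectralProj A θ E) : Commute A E := by
  have hEA : E * A = θ • E := by
    rw [← hE.1.eq, ← hA.eq, ← transpose_mul, hE.mul_eq_smul, transpose_smul, hE.1.eq]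
  exact hE.mul_eq_smul.trans hEA.symm

end SpectralProj

section Transition

variable {m : Type*} [Fintype m] [DecidableEq m] {A E : Matrix m m ℝ} {θ : ℝ}

theorem transition_mem_unitaryGroup (hA : A.IsSymm) (t : ℝ) :
    transition A t ∈ unitaryGroup m ℂ := by
  refine Matrix.exp_mem_unitaryGroup <| IsSelfAdjoint.smul_mem_skewAdjoint ?_ <|
    (isHermitian_iff_isSymm.mpr hA).map _ fun x => by simp
  simp [skewAdjoint.mem_iff]

theorem IsSpectralProj.two_mul_sub_one_le_norm_transition
    (hA : A.IsSymm) (hE : IsSpectralProj A θ E) (t : ℝ) (u : m) :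
    2 * E u u - 1 ≤ ‖transition A t u u‖ := by
  set F := E.map (fun x : ℝ => (x : ℂ))
  have hcast (M N : Matrix m m ℝ) : (M * N).map (fun x : ℝ => (x : ℂ)) =
      M.map (fun x : ℝ => (x : ℂ)) * N.map (fun x : ℝ => (x : ℂ)) :=
    Matrix.map_mul (f := Complex.ofRealHom)
  have hF : F.IsHermitian := (isHermitian_iff_isSymm.mpr hE.1).map _ fun x => by simp
  have hFF : F * F = F := by rw [← hcast, hE.2.1]
  have hUF : transition A t * F = Complex.exp (↑(t * θ) * Complex.I) • F := by
    rw [Complex.exp_eq_exp_ℂ]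
    apply Matrix.exp_mul_of_mul_eq_smul
    rw [smul_mul_assoc, ← hcast, hE.mul_eq_smul]
    ext i j
    simp [F]
    ring
  have hcomm : Commute (transition A t) F :=
    (((hE.commute hA).map Complex.ofRealHom.mapMatrix).smul_left _).exp_left
  have := Matrix.two_mul_re_sub_one_le_norm_apply_self (transition_mem_unitaryGroup hA t) hF hFF
    hUF hcomm (Complex.norm_exp_ofReal_mul_I _) u
  simpa [F] using this

theorem sedentary_of_forall_le_norm_transition {u : m} {δ : ℝ} (hδ : 0 < δ)
    (h : ∀ t : ℝ, δ ≤ ‖transition A t u u‖) : Sedentary A u :=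
  have : Nonempty {t : ℝ // 0 < t} := ⟨⟨1, one_pos⟩⟩
  hδ.trans_le (le_ciInf fun t => h t)

end Transition

/-- if `E_{u,u} > 1/2` for the spectral projection `E` of a real symmetric
matrix `A` at `θ`, then `|exp(itA)_{u,u}| ≥ 2E_{u,u} - 1` for all real `t`;
in particular `u` is sedentary. -/
theorem stmt0 {n : ℕ} (A : Matrix (Fin n) (Fin n) ℝ) (hA : A.IsSymm)
    (θ : ℝ) (E : Matrix (Fin n) (Fin n) ℝ) (hE : IsSpectralProj A θ E)
    (u : Fin n) (h : 1 / 2 < E u u) :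
    (∀ t : ℝ, 2 * E u u - 1 ≤ ‖transition A t u u‖) ∧ Sedentary A u := by
  have hbound (t : ℝ) := hE.two_mul_sub_one_le_norm_transition hA t u
  exact ⟨hbound, sedentary_of_forall_le_norm_transition (by linarith) hbound⟩
end

section
/- Let A be an n×n real symmetric matrix that is bipartite, witnessed by a diagonal matrix S with all diagonal entries ±1 satisfying S·A·S = −A. Let θ ∈ ℝ and let E be the orthogonal spectral projection of A for θ. Then S·E·S is the orthogonal spectral projection of A for −θ (it is real symmetric, idempotent, and for every vector v, A·v = −θ·v ↔ (S·E·S)·v = v), and (S·E·S)_{u,u} = E_{u,u} for every index u. Consequently, θ belongs to the eigenvalue support of u if and only if −θ does. -/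
open Matrix
open scoped Kronecker

/-! The signing `S` is a symmetric involution with `S A S = -A`, so conjugation by `S` carries
the `θ`-eigenspace of `A` onto the `(-θ)`-eigenspace, and hence `E` to the projection for `-θ`.
Being diagonal with entries `±1`, `S` leaves the diagonal of `E` unchanged and only flips signs
of the entries of each column, which cannot make a column vanish. -/

namespace Matrix

variable {m R : Type*} [Fintype m] [DecidableEq m] [Semiring R]

theorem mulVec_eq_iff_eq_mulVec_of_mul_self_eq_one {S : Matrix m m R} (hS : S * S = 1)
    {x y : m → R} : S *ᵥ x = y ↔ x = S *ᵥ y := by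
  constructor <;> rintro rfl <;> rw [mulVec_mulVec, hS, one_mulVec]

theorem diagonal_mul_mul_diagonal_apply (d : m → R) (M : Matrix m m R) (i j : m) :
    (diagonal d * M * diagonal d) i j = d i * M i j * d j := by
  rw [mul_diagonal, diagonal_mul]

theorem diagonal_mul_mul_diagonal_mulVec_single_eq_zero_iff [NoZeroDivisors R] {d : m → R}
    (hd : ∀ i, d i ≠ 0) (M : Matrix m m R) (u : m) :
    (diagonal d * M * diagonal d) *ᵥ Pi.single u 1 = 0 ↔ M *ᵥ Pi.single u 1 = 0 := by
  simp only [mulVec_single_one, funext_iff, col_apply, Pi.zero_apply,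
    diagonal_mul_mul_diagonal_apply, mul_eq_zero, hd, or_false, false_or]

end Matrix

open Matrix

namespace IsSpectralProj

variable {m : Type*} [Fintype m] [DecidableEq m] {A E : Matrix m m ℝ} {θ : ℝ}

theorem of_neg (h : IsSpectralProj (-A) θ E) : IsSpectralProj A (-θ) E := by
  obtain ⟨hsymm, hidem, heig⟩ := h
  refine ⟨hsymm, hidem, fun v => ?_⟩
  rw [← heig, neg_mulVec, neg_smul, neg_eq_iff_eq_neg, eq_comm]

theorem conj_involution {S : Matrix m m ℝ} (hSsymm : S.IsSymm) (hSS : S * S = 1)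
    (h : IsSpectralProj A θ E) : IsSpectralProj (S * A * S) θ (S * E * S) := by
  obtain ⟨hsymm, hidem, heig⟩ := h
  refine ⟨?_, ?_, fun v => ?_⟩
  · rw [IsSymm, transpose_mul, transpose_mul, hSsymm.eq, hsymm.eq, Matrix.mul_assoc]
  · calc S * E * S * (S * E * S) = S * E * (S * S) * E * S := by simp only [Matrix.mul_assoc]
      _ = S * E * S := by rw [hSS, Matrix.mul_one, Matrix.mul_assoc S E E, hidem]
  · rw [← mulVec_mulVec, ← mulVec_mulVec, ← mulVec_mulVec, ← mulVec_mulVec,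
      mulVec_eq_iff_eq_mulVec_of_mul_self_eq_one hSS,
      mulVec_eq_iff_eq_mulVec_of_mul_self_eq_one hSS, mulVec_smul, heig, eq_comm]

end IsSpectralProj

theorem stmt2_general {n : ℕ} (A : Matrix (Fin n) (Fin n) ℝ)
    (d : Fin n → ℝ) (hd : ∀ i, d i = 1 ∨ d i = -1)
    (S : Matrix (Fin n) (Fin n) ℝ) (hS : S = Matrix.diagonal d)
    (hbip : S * A * S = -A)
    (θ : ℝ) (E : Matrix (Fin n) (Fin n) ℝ) (hE : IsSpectralProj A θ E) :
    IsSpectralProj A (-θ) (S * E * S) ∧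
    (∀ u : Fin n, (S * E * S) u u = E u u) ∧
    (∀ u : Fin n,
      E.mulVec (Pi.single u 1) ≠ 0 ↔ (S * E * S).mulVec (Pi.single u 1) ≠ 0) := by
  subst hS
  have hd_sq : ∀ i, d i * d i = 1 := fun i => by rcases hd i with h | h <;> rw [h] <;> norm_num
  have hSS : diagonal d * diagonal d = 1 := by
    rw [diagonal_mul_diagonal, ← diagonal_one]
    exact congrArg diagonal (funext hd_sq)
  refine ⟨(hbip ▸ hE.conj_involution (isSymm_diagonal d) hSS).of_neg, fun u => ?_, fun u => ?_⟩
  · rw [diagonal_mul_mul_diagonal_apply, mul_right_comm, hd_sq, one_mul]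
  · have hd_ne : ∀ i, d i ≠ 0 := fun i => left_ne_zero_of_mul_eq_one (hd_sq i)
    exact (diagonal_mul_mul_diagonal_mulVec_single_eq_zero_iff hd_ne E u).not.symm

/-- if `A` is bipartite, witnessed by a `±1` diagonal matrix `S` with
`S·A·S = -A`, and `E` is the spectral projection of `A` for `θ`, then `S·E·S` is the
spectral projection of `A` for `-θ`, it has the same diagonal as `E`, and `θ` is in the
eigenvalue support of `u` iff `-θ` is. -/
theorem stmt2 {n : ℕ} (A : Matrix (Fin n) (Fin n) ℝ) (hA : A.IsSymm)
    (d : Fin n → ℝ) (hd : ∀ i, d i = 1 ∨ d i = -1)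
    (S : Matrix (Fin n) (Fin n) ℝ) (hS : S = Matrix.diagonal d)
    (hbip : S * A * S = -A)
    (θ : ℝ) (E : Matrix (Fin n) (Fin n) ℝ) (hE : IsSpectralProj A θ E) :
    IsSpectralProj A (-θ) (S * E * S) ∧
    (∀ u : Fin n, (S * E * S) u u = E u u) ∧
    (∀ u : Fin n,
      E.mulVec (Pi.single u 1) ≠ 0 ↔ (S * E * S).mulVec (Pi.single u 1) ≠ 0) :=
  stmt2_general A d hd S hS hbip θ E hE
end

section
/- Let A be an n×n real symmetric matrix that is bipartite (there is a ±1 diagonal matrix S with S·A·S = −A), let u be an index, let θ ≠ 0 be a real number in the eigenvalue support of u, and let E_θ be the orthogonal spectral projection of A for θ. Then (E_θ)_{u,u} ≤ 1/2. If, in addition, 0 belongs to the eigenvalue support of u (i.e., some vector w with A·w = 0 has w_u ≠ 0), then (E_θ)_{u,u} < 1/2. -/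
open Matrix
open scoped Kronecker

/-
The reflection `S` conjugates the `θ`-projection `E` into the `(-θ)`-projection `S E S`, which
has the same diagonal and is orthogonal to `E`. Hence `E + S E S` is an orthogonal projection,
whose diagonal entries are at most `1`, giving `2 E_uu ≤ 1`. A null vector `w` with `w_u ≠ 0`
is orthogonal to the range of `E + S E S`, and Cauchy–Schwarz against the `u`-th column of
`1 - (E + S E S)` makes the inequality strict.
-/

namespace Matrix

variable {m R : Type*} [Fintype m]

theorem IsSymm.dotProduct_eq_zero_of_eigenvalue_ne [CommRing R] [IsDomain R]
    {A : Matrix m m R} (hA : A.IsSymm) {θ μ : R} (hne : θ ≠ μ) {v w : m → R}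
    (hv : A *ᵥ v = θ • v) (hw : A *ᵥ w = μ • w) : v ⬝ᵥ w = 0 := by
  have h : θ * (v ⬝ᵥ w) = μ * (v ⬝ᵥ w) :=
    calc θ * (v ⬝ᵥ w) = (A *ᵥ v) ⬝ᵥ w := by rw [hv, smul_dotProduct, smul_eq_mul]
      _ = v ⬝ᵥ (A *ᵥ w) := by rw [dotProduct_mulVec, ← mulVec_transpose, hA]
      _ = μ * (v ⬝ᵥ w) := by rw [hw, dotProduct_smul, smul_eq_mul]
  exact (mul_eq_mul_right_iff.mp h).resolve_left hne

theorem IsSymm.apply_self_eq_sum_sq [CommSemiring R] {P : Matrix m m R} (hP : P.IsSymm)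
    (hPP : P * P = P) (u : m) : P u u = ∑ k, P k u ^ 2 := by
  conv_lhs => rw [← hPP, mul_apply]
  exact Finset.sum_congr rfl fun k _ => by rw [sq, hP.apply k u]

variable [CommRing R] [LinearOrder R] [IsStrictOrderedRing R]

theorem IsSymm.sq_apply_le_apply_self_mul_sum_sq {Q : Matrix m m R} (hQ : Q.IsSymm)
    (hQQ : Q * Q = Q) {w : m → R} (hw : Q *ᵥ w = w) (u : m) :
    w u ^ 2 ≤ Q u u * ∑ k, w k ^ 2 := by
  have hQw : ∑ k, Q k u * w k = w u := by
    conv_rhs => rw [← hw, mulVec, dotProduct]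
    exact Finset.sum_congr rfl fun k _ => by rw [hQ.apply u k]
  rw [← hQw, hQ.apply_self_eq_sum_sq hQQ]
  exact Finset.sum_mul_sq_le_sq_mul_sq _ _ _

variable [DecidableEq m]

theorem IsSymm.apply_self_le_one {P : Matrix m m R} (hP : P.IsSymm) (hPP : P * P = P)
    (u : m) : P u u ≤ 1 := by
  have h := (isSymm_one.sub hP).apply_self_eq_sum_sq (IsIdempotentElem.one_sub hPP) u
  rw [sub_apply, one_apply_eq] at h
  linarith [Finset.sum_nonneg fun k (_ : k ∈ Finset.univ) => sq_nonneg ((1 - P) k u)]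

theorem IsSymm.apply_self_lt_one_of_mulVec_eq_zero {P : Matrix m m R} (hP : P.IsSymm)
    (hPP : P * P = P) {w : m → R} (hw : P *ᵥ w = 0) {u : m} (hwu : w u ≠ 0) :
    P u u < 1 := by
  have h := (isSymm_one.sub hP).sq_apply_le_apply_self_mul_sum_sq
    (IsIdempotentElem.one_sub hPP) (by rw [sub_mulVec, one_mulVec, hw, sub_zero]) u
  rw [sub_apply, one_apply_eq] at h
  have hsq : 0 < w u ^ 2 := by positivity
  exact sub_pos.mp <| pos_of_mul_pos_left (hsq.trans_le h)
    (Finset.sum_nonneg fun k _ => sq_nonneg (w k))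

end Matrix

namespace IsSpectralProj

variable {m : Type*} [Fintype m] [DecidableEq m] {A E F S : Matrix m m ℝ} {θ μ : ℝ}

theorem mulVec_mulVec_eq_smul (hE : IsSpectralProj A θ E) (x : m → ℝ) :
    A *ᵥ (E *ᵥ x) = θ • E *ᵥ x :=
  (hE.2.2 _).mpr (by rw [mulVec_mulVec, hE.2.1])

theorem mulVec_eq_zero_of_ne (hA : A.IsSymm) (hE : IsSpectralProj A θ E) (hne : θ ≠ μ)
    {v : m → ℝ} (hv : A *ᵥ v = μ • v) : E *ᵥ v = 0 := by
  ext i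
  have h :=
    hA.dotProduct_eq_zero_of_eigenvalue_ne hne (hE.mulVec_mulVec_eq_smul (Pi.single i 1)) hv
  rwa [mulVec_single_one, col_eq_transpose, hE.1] at h

theorem mul_eq_zero_of_ne (hA : A.IsSymm) (hE : IsSpectralProj A θ E)
    (hF : IsSpectralProj A μ F) (hne : θ ≠ μ) : E * F = 0 :=
  ext_of_mulVec_single fun j => by
    rw [← mulVec_mulVec, hE.mulVec_eq_zero_of_ne hA hne (hF.mulVec_mulVec_eq_smul _),
      zero_mulVec]

theorem conj_of_mul_mul_eq_neg (hSS : S * S = 1) (hS : S.IsSymm) (hbip : S * A * S = -A)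
    (hE : IsSpectralProj A θ E) : IsSpectralProj A (-θ) (S * E * S) := by
  have hS_invol : ∀ x, S *ᵥ (S *ᵥ x) = x := fun x => by rw [mulVec_mulVec, hSS, one_mulVec]
  have hS_inj : Function.Injective (S *ᵥ ·) := Function.LeftInverse.injective hS_invol
  have hAS : ∀ v, A *ᵥ (S *ᵥ v) = -(S *ᵥ (A *ᵥ v)) := fun v => by
    have : A * S = -(S * A) := by
      rw [← Matrix.mul_neg, ← hbip, ← Matrix.mul_assoc, ← Matrix.mul_assoc, hSS, Matrix.one_mul]
    rw [mulVec_mulVec, mulVec_mulVec, this, neg_mulVec]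
  refine ⟨?_, ?_, fun v => ?_⟩
  · simp only [IsSymm, transpose_mul, hS.eq, hE.1.eq, Matrix.mul_assoc]
  · calc S * E * S * (S * E * S) = S * (E * (S * S) * E) * S := by
          simp only [Matrix.mul_assoc]
      _ = S * E * S := by rw [hSS, Matrix.mul_one, hE.2.1, Matrix.mul_assoc]
  · calc A *ᵥ v = -θ • v ↔ A *ᵥ (S *ᵥ v) = θ • S *ᵥ v := by
          rw [hAS, neg_eq_iff_eq_neg, ← neg_smul, ← mulVec_smul, hS_inj.eq_iff]
      _ ↔ E *ᵥ (S *ᵥ v) = S *ᵥ v := hE.2.2 _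
      _ ↔ (S * E * S) *ᵥ v = v := by
          rw [← mulVec_mulVec, ← mulVec_mulVec, ← hS_inj.eq_iff, hS_invol]

end IsSpectralProj

theorem stmt3_general {n : ℕ} (A : Matrix (Fin n) (Fin n) ℝ) (hA : A.IsSymm)
    (d : Fin n → ℝ) (hd : ∀ i, d i = 1 ∨ d i = -1)
    (S : Matrix (Fin n) (Fin n) ℝ) (hS : S = Matrix.diagonal d)
    (hbip : S * A * S = -A)
    (u : Fin n) (θ : ℝ) (hθ : θ ≠ 0)
    (Eθ : Matrix (Fin n) (Fin n) ℝ) (hEθ : IsSpectralProj A θ Eθ) :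
    Eθ u u ≤ 1 / 2 ∧
    ((∃ w : Fin n → ℝ, A.mulVec w = 0 ∧ w u ≠ 0) → Eθ u u < 1 / 2) := by
  have hd_sq : ∀ i, d i * d i = 1 := fun i => by rcases hd i with h | h <;> simp [h]
  have hSS : S * S = 1 := by
    rw [hS, diagonal_mul_diagonal, ← diagonal_one]
    exact congrArg diagonal (funext hd_sq)
  have hF := hEθ.conj_of_mul_mul_eq_neg hSS (hS ▸ isSymm_diagonal d) hbip
  have hFuu : (S * Eθ * S) u u = Eθ u u := by
    rw [hS, mul_diagonal, diagonal_mul, mul_right_comm, hd_sq, one_mul]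
  have hne : θ ≠ -θ := fun h => hθ (by linarith)
  set P := Eθ + S * Eθ * S with hP
  have hPsymm : P.IsSymm := hEθ.1.add hF.1
  have hPP : P * P = P := IsIdempotentElem.add hEθ.2.1 hF.2.1 <| by
    rw [hEθ.mul_eq_zero_of_ne hA hF hne, hF.mul_eq_zero_of_ne hA hEθ hne.symm, add_zero]
  have hPuu : P u u = 2 * Eθ u u := by rw [hP, Matrix.add_apply, hFuu]; ring
  refine ⟨by linarith [hPsymm.apply_self_le_one hPP u], fun ⟨w, hw, hwu⟩ => ?_⟩
  have hw0 : A *ᵥ w = (0 : ℝ) • w := by rw [hw, zero_smul]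
  have hPw : P *ᵥ w = 0 := by
    rw [add_mulVec, hEθ.mulVec_eq_zero_of_ne hA hθ hw0,
      hF.mulVec_eq_zero_of_ne hA (neg_ne_zero.mpr hθ) hw0, add_zero]
  linarith [hPsymm.apply_self_lt_one_of_mulVec_eq_zero hPP hPw hwu]

/-- for a bipartite real symmetric matrix `A`, a nonzero `θ` in the eigenvalue
support of `u` satisfies `(E_θ)_{u,u} ≤ 1/2`; if moreover `0` is in the eigenvalue support
of `u` (some null vector of `A` is nonzero at `u`), then `(E_θ)_{u,u} < 1/2`. -/
theorem stmt3 {n : ℕ} (A : Matrix (Fin n) (Fin n) ℝ) (hA : A.IsSymm)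
    (d : Fin n → ℝ) (hd : ∀ i, d i = 1 ∨ d i = -1)
    (S : Matrix (Fin n) (Fin n) ℝ) (hS : S = Matrix.diagonal d)
    (hbip : S * A * S = -A)
    (u : Fin n) (θ : ℝ) (hθ : θ ≠ 0)
    (Eθ : Matrix (Fin n) (Fin n) ℝ) (hEθ : IsSpectralProj A θ Eθ)
    (hsupp : Eθ.mulVec (Pi.single u 1) ≠ 0) :
    Eθ u u ≤ 1 / 2 ∧
    ((∃ w : Fin n → ℝ, A.mulVec w = 0 ∧ w u ≠ 0) → Eθ u u < 1 / 2) :=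
  stmt3_general A hA d hd S hS hbip u θ hθ Eθ hEθ
end

section
/- Let A be an n×n real symmetric matrix that is bipartite (there is a ±1 diagonal matrix S with S·A·S = −A). Then for every real t and every index u, the diagonal entry exp(itA)_{u,u} is a real number (its imaginary part is zero), and exp(itA)_{u,u} = exp(−itA)_{u,u}. -/
/-!
Conjugating by the sign matrix `S` turns `itA` into `-itA`, so `U(-t) = S U(t) S`, and since
`S` is diagonal with entries `±1`, `U(-t)` and `U(t)` have the same diagonal. Because `A` is
real, `U(t)ᴴ = exp(-itAᵀ) = U(-t)ᵀ`, so each diagonal entry of `U(t)` is conjugate to the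
corresponding one of `U(-t)`, hence to itself.
-/

open Matrix
open scoped Kronecker

section

variable {m : Type*} [Fintype m] [DecidableEq m]

theorem transition_transpose (A : Matrix m m ℝ) (t : ℝ) :
    transition Aᵀ t = (transition A t)ᵀ := by
  rw [transition, transition, ← exp_transpose, transpose_smul, transpose_map]

theorem conjTranspose_transition (A : Matrix m m ℝ) (t : ℝ) :
    (transition A t)ᴴ = transition Aᵀ (-t) := by
  have hA : (A.map ((↑) : ℝ → ℂ))ᴴ = Aᵀ.map (↑) := by
    ext i j; simp
  rw [transition, transition, ← exp_conjTranspose, conjTranspose_smul, hA]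
  congr 2
  simp

theorem star_transition_apply_self (A : Matrix m m ℝ) (t : ℝ) (u : m) :
    star (transition A t u u) = transition A (-t) u u := by
  rw [← conjTranspose_apply, conjTranspose_transition, transition_transpose, transpose_apply]

theorem transition_neg_eq_conj (A S : Matrix m m ℝ) (hSS : S * S = 1) (hSA : S * A * S = -A)
    (t : ℝ) :
    transition A (-t) = S.map (↑) * transition A t * S.map (↑) := by
  set Sc : Matrix m m ℂ := S.map (↑)
  have hScSc : Sc * Sc = 1 := by
    have h := congrArg Complex.ofRealHom.mapMatrix hSS
    rwa [map_mul, map_one] at h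
  have hSc_inv : Sc⁻¹ = Sc := inv_eq_right_inv hScSc
  have hScA : Sc * A.map (↑) * Sc = -A.map ((↑) : ℝ → ℂ) := by
    have h := congrArg Complex.ofRealHom.mapMatrix hSA
    rwa [map_mul, map_mul, map_neg] at h
  have hexp := exp_conj Sc ((Complex.I * t) • A.map (↑)) ⟨⟨Sc, Sc, hScSc, hScSc⟩, rfl⟩
  rw [hSc_inv, Matrix.mul_smul, Matrix.smul_mul, hScA, smul_neg, ← neg_smul] at hexp
  rw [transition, transition, ← hexp]
  congr 2
  push_cast
  ring

theorem transition_neg_apply_self_of_bipartite (A : Matrix m m ℝ) (d : m → ℝ)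
    (hd : ∀ i, d i = 1 ∨ d i = -1) (hdA : diagonal d * A * diagonal d = -A) (t : ℝ) (u : m) :
    transition A (-t) u u = transition A t u u := by
  have hdd : diagonal d * diagonal d = 1 := by
    rw [diagonal_mul_diagonal, ← diagonal_one]
    congr 1; ext i; rcases hd i with h | h <;> simp [h]
  rw [transition_neg_eq_conj A _ hdd hdA, diagonal_map (by simp), mul_diagonal, diagonal_mul]
  rcases hd u with h | h <;> simp [h]

end

theorem stmt4_general {n : ℕ} (A : Matrix (Fin n) (Fin n) ℝ)
    (d : Fin n → ℝ) (hd : ∀ i, d i = 1 ∨ d i = -1)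
    (S : Matrix (Fin n) (Fin n) ℝ) (hS : S = Matrix.diagonal d)
    (hbip : S * A * S = -A) :
    ∀ (t : ℝ) (u : Fin n),
      (transition A t u u).im = 0 ∧ transition A t u u = transition A (-t) u u := by
  intro t u
  subst hS
  have hsym := transition_neg_apply_self_of_bipartite A d hd hbip t u
  refine ⟨Complex.conj_eq_iff_im.mp ?_, hsym.symm⟩
  exact (star_transition_apply_self A t u).trans hsym

/-- for a bipartite real symmetric matrix `A`, each diagonal entry of
`exp(itA)` is real, and `exp(itA)_{u,u} = exp(-itA)_{u,u}`. -/
theorem stmt4 {n : ℕ} (A : Matrix (Fin n) (Fin n) ℝ) (hA : A.IsSymm)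
    (d : Fin n → ℝ) (hd : ∀ i, d i = 1 ∨ d i = -1)
    (S : Matrix (Fin n) (Fin n) ℝ) (hS : S = Matrix.diagonal d)
    (hbip : S * A * S = -A) :
    ∀ (t : ℝ) (u : Fin n),
      (transition A t u u).im = 0 ∧ transition A t u u = transition A (-t) u u :=
  stmt4_general A d hd S hS hbip
end

section
/- Let n ≥ 3 be odd and let α be a nonzero real number with |α| > √((n−1)/2). Let A be the n×n real symmetric matrix of the weighted path on vertices 1,…,n defined by A_{1,2} = A_{2,1} = 1/α, A_{j,j+1} = A_{j+1,j} = 1 for 2 ≤ j ≤ n−1, and all other entries 0. Then the end vertex 1 is sedentary: inf_{t>0} |exp(itA)_{1,1}| > 0 (indeed |exp(itA)_{1,1}| ≥ 2·α²/(α² + (n−1)/2) − 1 > 0 for all real t). -/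
open Matrix
open scoped Kronecker

/-!
The vector `v = (α, 0, -1, 0, 1, 0, -1, …)` spans the kernel of `A`, so `U(t) = exp(itA)` fixes
`v`. Splitting `e₁ = p + w` with `p` the orthogonal projection of `e₁` onto `ℝv` and `w ⟂ v`,
unitarity of `U(t)` gives `U(t)₁₁ = ‖p‖² + ⟪w, U(t) w⟫`, hence
`|U(t)₁₁| ≥ ‖p‖² - ‖w‖² = 2 v₁² / ‖v‖² - 1 = 2 α² / (α² + (n - 1) / 2) - 1`.
-/

open scoped InnerProductSpace

section Isometry

variable {𝕜 E : Type*} [RCLike 𝕜] [NormedAddCommGroup E] [InnerProductSpace 𝕜 E]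

theorem two_mul_norm_starProjection_sq_sub_le_norm_inner_map (U : E →ₗᵢ[𝕜] E)
    (K : Submodule 𝕜 E) [K.HasOrthogonalProjection] {c : 𝕜} (hc : ‖c‖ = 1)
    (hK : ∀ y ∈ K, U y = c • y) (x : E) :
    2 * ‖K.starProjection x‖ ^ 2 - ‖x‖ ^ 2 ≤ ‖⟪x, U x⟫_𝕜‖ := by
  set y := K.starProjection x
  set w := x - y
  have hy : y ∈ K := K.starProjection_apply_mem x
  have hw : w ∈ Kᗮ := K.sub_starProjection_mem_orthogonal x
  have hyw : ⟪y, w⟫_𝕜 = 0 := Submodule.inner_right_of_mem_orthogonal hy hw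
  -- `⟪c • y, U w⟫ = ⟪U y, U w⟫ = ⟪y, w⟫ = 0` and `c ≠ 0`
  have hyUw : ⟪y, U w⟫_𝕜 = 0 := by
    have h := U.inner_map_map y w
    rw [hK y hy, inner_smul_left, hyw, mul_eq_zero] at h
    exact h.resolve_left (by simp [← norm_ne_zero_iff, hc])
  have hinner : ⟪x, U x⟫_𝕜 = c * (‖y‖ ^ 2 : ℝ) + ⟪w, U w⟫_𝕜 := by
    have hx : x = y + w := (add_sub_cancel y x).symm
    rw [hx, map_add, hK y hy, inner_add_left, inner_add_right, inner_add_right, hyUw,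
      inner_smul_right, inner_self_eq_norm_sq_to_K, inner_smul_right,
      Submodule.inner_left_of_mem_orthogonal hy hw]
    push_cast; ring
  have hpyth : ‖x‖ ^ 2 = ‖y‖ ^ 2 + ‖w‖ ^ 2 := by
    rw [← add_sub_cancel y x, sq, sq, sq,
      norm_add_sq_eq_norm_sq_add_norm_sq_of_inner_eq_zero y w hyw]
  have hCS : ‖⟪w, U w⟫_𝕜‖ ≤ ‖w‖ ^ 2 := by
    simpa [sq] using norm_inner_le_norm (𝕜 := 𝕜) w (U w)
  have hy2 : ‖c * (‖y‖ ^ 2 : ℝ)‖ = ‖y‖ ^ 2 := by simp [hc]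
  have htri := norm_sub_le ⟪x, U x⟫_𝕜 ⟪w, U w⟫_𝕜
  rw [← eq_sub_of_add_eq hinner.symm, hy2] at htri
  linarith

theorem two_mul_norm_inner_sq_div_sub_le_norm_inner_map (U : E →ₗᵢ[𝕜] E) {v : E} {c : 𝕜}
    (hc : ‖c‖ = 1) (hv : U v = c • v) (x : E) :
    2 * (‖⟪v, x⟫_𝕜‖ ^ 2 / ‖v‖ ^ 2) - ‖x‖ ^ 2 ≤ ‖⟪x, U x⟫_𝕜‖ := by
  have hK : ∀ y ∈ 𝕜 ∙ v, U y = c • y := by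
    intro y hy
    obtain ⟨a, rfl⟩ := Submodule.mem_span_singleton.mp hy
    rw [map_smul, hv, smul_comm]
  convert two_mul_norm_starProjection_sq_sub_le_norm_inner_map U _ hc hK x using 3
  rw [Submodule.starProjection_singleton, norm_smul, norm_div, RCLike.norm_ofReal,
    abs_of_nonneg (by positivity), mul_pow, div_pow]
  by_cases hv0 : v = 0
  · simp [hv0]
  · field_simp

end Isometry

theorem NormedSpace.exp_apply_of_apply_eq_smul {𝕜 E : Type*} [RCLike 𝕜] [NormedAddCommGroup E]
    [NormedSpace 𝕜 E] [CompleteSpace E] (S : E →L[𝕜] E) {v : E} {c : 𝕜} (hv : S v = c • v) :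
    exp S v = exp c • v := by
  have hpow : ∀ n : ℕ, (S ^ n) v = c ^ n • v := by
    intro n
    induction n with
    | zero => simp
    | succ n ih => rw [pow_succ', mul_apply_eq_comp, ih, map_smul, hv, smul_smul, pow_succ]
  rw [exp_eq_tsum 𝕜, exp_eq_tsum 𝕜]
  dsimp only
  rw [← ContinuousLinearMap.apply_apply v, ContinuousLinearMap.map_tsum _ (expSeries_summable' S)]
  simp only [ContinuousLinearMap.apply_apply, _root_.smul_apply, hpow, smul_smul, ← smul_eq_mul]
  exact (expSeries_summable' c).tsum_smul_const v

section Transition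

variable {m : Type*} [Fintype m] [DecidableEq m]

theorem toEuclideanCLM_transition (A : Matrix m m ℝ) (t : ℝ) :
    toEuclideanCLM (𝕜 := ℂ) (transition A t) =
      NormedSpace.exp ((Complex.I * t) • toEuclideanCLM (𝕜 := ℂ) (A.map (↑))) := by
  let := Matrix.linftyOpNormedRing (n := m) (α := ℂ)
  let := Matrix.linftyOpNormedAlgebra (n := m) (α := ℂ) (R := ℂ)
  let +nondep : NormedAlgebra ℚ (Matrix m m ℂ) := .restrictScalars ℚ ℂ _
  let f := (toEuclideanCLM (n := m) (𝕜 := ℂ)).toAlgEquiv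
  have hcont : Continuous f := f.toLinearMap.continuous_of_finiteDimensional
  rw [transition, ← map_smul]
  exact NormedSpace.map_exp f hcont _

theorem toEuclideanCLM_transition_mem_unitary {A : Matrix m m ℝ} (hA : A.IsSymm) (t : ℝ) :
    toEuclideanCLM (𝕜 := ℂ) (transition A t) ∈ unitary _ := by
  let +nondep : NormedAlgebra ℚ (EuclideanSpace ℂ m →L[ℂ] EuclideanSpace ℂ m) :=
    .restrictScalars ℚ ℂ _
  rw [toEuclideanCLM_transition]
  refine NormedSpace.exp_mem_unitary_of_mem_skewAdjoint (IsSelfAdjoint.smul_mem_skewAdjoint ?_ ?_)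
  · simp [skewAdjoint.mem_iff]
  · exact IsSelfAdjoint.map
      ((isHermitian_iff_isSymm.mpr hA).map _ fun x ↦ (Complex.conj_ofReal x).symm) _

theorem two_mul_sq_div_sub_one_le_norm_transition {A : Matrix m m ℝ} (hA : A.IsSymm) {θ : ℝ}
    {v : m → ℝ} (hv : A *ᵥ v = θ • v) (u : m) (t : ℝ) :
    2 * (v u ^ 2 / ∑ k, v k ^ 2) - 1 ≤ ‖transition A t u u‖ := by
  set U := Unitary.linearIsometryEquiv ⟨_, toEuclideanCLM_transition_mem_unitary hA t⟩
  have hU : ∀ x, U x = toEuclideanCLM (𝕜 := ℂ) (transition A t) x := fun _ ↦ rfl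
  set w : EuclideanSpace ℂ m := WithLp.toLp 2 (fun k ↦ (v k : ℂ))
  have hTw : toEuclideanCLM (𝕜 := ℂ) (A.map (↑)) w = (θ : ℂ) • w := by
    ext k
    have := congrArg (fun x : ℝ ↦ (x : ℂ)) (congrFun hv k)
    simpa [mulVec, dotProduct, w] using this
  have hUw : U w = Complex.exp ((θ * t : ℝ) * Complex.I) • w := by
    rw [hU, toEuclideanCLM_transition,
      NormedSpace.exp_apply_of_apply_eq_smul _ (c := Complex.I * t * θ), ← Complex.exp_eq_exp_ℂ]
    · push_cast; ring_nf
    · rw [_root_.smul_apply, hTw, smul_smul]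
  have key := two_mul_norm_inner_sq_div_sub_le_norm_inner_map U.toLinearIsometry
    (Complex.norm_exp_ofReal_mul_I _) hUw (EuclideanSpace.single u 1)
  have hentry :
      ⟪EuclideanSpace.single u 1, U (EuclideanSpace.single u 1)⟫_ℂ = transition A t u u := by
    simp [hU, EuclideanSpace.inner_single_left]
  have hwu : ⟪w, EuclideanSpace.single u 1⟫_ℂ = v u := by
    simp [w, EuclideanSpace.inner_single_right]
  have hw : ‖w‖ ^ 2 = ∑ k, v k ^ 2 := by
    simp [w, EuclideanSpace.norm_sq_eq]
  simpa [hentry, hwu, hw] using key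

theorem sedentary_of_le_norm_transition {A : Matrix m m ℝ} {u : m} {c : ℝ} (hc : 0 < c)
    (h : ∀ t : ℝ, c ≤ ‖transition A t u u‖) : Sedentary A u :=
  have : Nonempty {t : ℝ // 0 < t} := ⟨⟨1, one_pos⟩⟩
  hc.trans_le (le_ciInf fun t ↦ h t)

end Transition

noncomputable def weightedPath (n : ℕ) (α : ℝ) : Matrix (Fin n) (Fin n) ℝ :=
  of fun i j ↦ if (i.val = 0 ∧ j.val = 1) ∨ (i.val = 1 ∧ j.val = 0) then 1 / α
    else if i.val + 1 = j.val ∨ j.val + 1 = i.val then 1 else 0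

def pathKernelVec (α : ℝ) (k : ℕ) : ℝ :=
  if k = 0 then α else if Even k then (-1) ^ (k / 2) else 0

theorem weightedPath_isSymm (n : ℕ) (α : ℝ) : (weightedPath n α).IsSymm :=
  IsSymm.ext fun i j ↦ by simp only [weightedPath, of_apply]; split_ifs <;> first | rfl | omega

theorem weightedPath_apply_eq_zero {n : ℕ} {α : ℝ} {i j : Fin n}
    (h : i.val + 1 ≠ j.val ∧ j.val + 1 ≠ i.val) : weightedPath n α i j = 0 := by
  simp only [weightedPath, of_apply]; split_ifs <;> first | rfl | omega

theorem pathKernelVec_of_odd {k : ℕ} (hk : Odd k) (α : ℝ) : pathKernelVec α k = 0 := by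
  simp [pathKernelVec, Nat.not_even_iff_odd.mpr hk, hk.pos.ne']

theorem sum_range_pathKernelVec_sq (α : ℝ) (m : ℕ) :
    ∑ k ∈ Finset.range (2 * m + 1), pathKernelVec α k ^ 2 = α ^ 2 + m := by
  induction m with
  | zero => simp [pathKernelVec]
  | succ m ih =>
    rw [show 2 * (m + 1) + 1 = 2 * m + 1 + 1 + 1 by ring, Finset.sum_range_succ,
      Finset.sum_range_succ, ih, pathKernelVec_of_odd (odd_two_mul_add_one m)]
    have hev : Even (2 * m + 1 + 1) := ⟨m + 1, by ring⟩
    have hsq : ((-1 : ℝ) ^ ((2 * m + 1 + 1) / 2)) ^ 2 = 1 := by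
      rw [← pow_mul, pow_mul', neg_one_sq, one_pow]
    simp only [pathKernelVec, Nat.add_one_ne_zero, if_false, if_pos hev, hsq]
    push_cast
    ring

theorem weightedPath_mulVec_pathKernelVec {n : ℕ} (hn : Odd n) {α : ℝ} (hα : α ≠ 0) :
    weightedPath n α *ᵥ (fun k ↦ pathKernelVec α k) = 0 := by
  ext i
  simp only [mulVec, dotProduct, Pi.zero_apply]
  rcases Nat.even_or_odd i.val with hi | hi
  · refine Finset.sum_eq_zero fun j _ ↦ ?_
    by_cases hj : i.val + 1 = j.val ∨ j.val + 1 = i.val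
    · rw [pathKernelVec_of_odd (by rcases hj with hj | hj <;> grind), mul_zero]
    · rw [weightedPath_apply_eq_zero (by omega), zero_mul]
  · obtain ⟨r, hr⟩ := hi
    obtain ⟨s, hs⟩ := hn
    have hlt : i.val + 1 < n := by omega
    rw [Fintype.sum_eq_add ⟨i.val - 1, by omega⟩ ⟨i.val + 1, hlt⟩ (by simp [Fin.ext_iff])
      fun j hj ↦ by
        rw [weightedPath_apply_eq_zero (by simp [Fin.ext_iff] at hj; omega), zero_mul]]
    rcases r with _ | r
    · simp [weightedPath, pathKernelVec, hr, hα]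
    · have he : Even (2 * (r + 1) + 1 + 1) := ⟨r + 2, by omega⟩
      simp [weightedPath, pathKernelVec, hr, he,
        show (2 * (r + 1) + 1 + 1) / 2 = r + 1 + 1 by omega, pow_succ]

theorem two_mul_div_sub_one_le_norm_transition_weightedPath (m : ℕ) {α : ℝ} (hα : α ≠ 0)
    (t : ℝ) : 2 * (α ^ 2 / (α ^ 2 + m)) - 1 ≤
      ‖transition (weightedPath (2 * m + 1) α) t ⟨0, (2 * m).succ_pos⟩ ⟨0, (2 * m).succ_pos⟩‖ := by
  set v : Fin (2 * m + 1) → ℝ := fun k ↦ pathKernelVec α k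
  have hker : weightedPath (2 * m + 1) α *ᵥ v = (0 : ℝ) • v := by
    rw [weightedPath_mulVec_pathKernelVec (odd_two_mul_add_one m) hα, zero_smul]
  have hsum : ∑ k, v k ^ 2 = α ^ 2 + m :=
    (Fin.sum_univ_eq_sum_range (fun k ↦ pathKernelVec α k ^ 2) _).trans
      (sum_range_pathKernelVec_sq α m)
  have h := two_mul_sq_div_sub_one_le_norm_transition (weightedPath_isSymm _ α) hker
    ⟨0, (2 * m).succ_pos⟩ t
  rwa [hsum, show v ⟨0, _⟩ = α from if_pos rfl] at h

/-- for odd `n ≥ 3` and `|α| > √((n-1)/2)`, the weighted path on `n` vertices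
whose first edge has weight `1/α` and all other edges weight `1` has a sedentary end vertex:
`|exp(itA)_{1,1}| ≥ 2·α²/(α² + (n-1)/2) − 1 > 0` for all real `t`.
(Vertices `1,…,n` are indexed by `Fin n`, vertex `1` being index `0`.) -/
theorem stmt10 {n : ℕ} (hn : 3 ≤ n) (hodd : Odd n)
    (α : ℝ) (hbig : Real.sqrt (((n : ℝ) - 1) / 2) < |α|)
    (A : Matrix (Fin n) (Fin n) ℝ)
    (hA : ∀ i j : Fin n, A i j =
      if (i.val = 0 ∧ j.val = 1) ∨ (i.val = 1 ∧ j.val = 0) then 1 / α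
      else if i.val + 1 = j.val ∨ j.val + 1 = i.val then 1 else 0) :
    0 < 2 * (α ^ 2 / (α ^ 2 + ((n : ℝ) - 1) / 2)) - 1 ∧
    (∀ t : ℝ, 2 * (α ^ 2 / (α ^ 2 + ((n : ℝ) - 1) / 2)) - 1 ≤
      ‖transition A t ⟨0, by omega⟩ ⟨0, by omega⟩‖) ∧
    Sedentary A ⟨0, by omega⟩ := by
  obtain rfl : A = weightedPath n α := Matrix.ext hA
  have hα : α ≠ 0 := by
    rintro rfl
    rw [abs_zero] at hbig
    exact (Real.sqrt_nonneg _).not_gt hbig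
  obtain ⟨m, rfl⟩ := hodd
  have hcast : ((↑(2 * m + 1) : ℝ) - 1) / 2 = m := by push_cast; ring
  rw [hcast] at hbig ⊢
  have hm : (m : ℝ) < α ^ 2 := by rwa [Real.sqrt_lt' (by positivity), sq_abs] at hbig
  have hpos : 0 < 2 * (α ^ 2 / (α ^ 2 + m)) - 1 := by
    rw [sub_pos, mul_div_assoc', lt_div_iff₀ (by positivity)]
    linarith
  have hbound := two_mul_div_sub_one_le_norm_transition_weightedPath m hα
  exact ⟨hpos, hbound, sedentary_of_le_norm_transition hpos hbound⟩
end

section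
/- Let A be an n×n real symmetric matrix that is bipartite (there is a ±1 diagonal matrix S with S·A·S = −A), let u be an index, and let E₀ be the orthogonal spectral projection of A for the eigenvalue 0. Suppose E₀·e_u ≠ 0, (E₀)_{u,u} < 1/2, and there is exactly one positive real number λ in the eigenvalue support of u (i.e., exactly one λ > 0 with E_λ·e_u ≠ 0). Then exp(i(π/λ)A)_{u,u} is a negative real number, and u is not sedentary: inf_{t>0} |exp(itA)_{u,u}| = 0. -/
/-!
Diagonalizing `A = Q diag(μ) Qᵀ` with `Q` orthogonal gives
`U(t)_{uu} = ∑_θ e^{itθ} (E_θ)_{uu}`. Conjugation by the signature matrix `S` maps `E_θ` to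
`E_{-θ}` and fixes diagonal entries, so the eigenvalue support of `u` is `{0, λ, -λ}` and
`U(t)_{uu} = a + 2b cos(λt)` with `a = (E₀)_{uu}`, `b = (E_λ)_{uu}`; evaluating at `t = 0` gives
`a + 2b = 1`. At `t = π/λ` the entry is `a - 2b = 2a - 1 < 0`, and since it equals `1` at
`t = 0`, the intermediate value theorem produces a time at which it vanishes.
-/

open Matrix
open scoped Kronecker

theorem Matrix.conj_mulVec_eq_smul_iff {m : Type*} [Fintype m] [DecidableEq m]
    {M Q : Matrix m m ℝ} (hQ : Q ∈ orthogonalGroup m ℝ) (c : ℝ) (v : m → ℝ) :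
    (Q * M * Qᵀ) *ᵥ v = c • v ↔ M *ᵥ (Qᵀ *ᵥ v) = c • (Qᵀ *ᵥ v) := by
  constructor
  · intro h
    simpa [mulVec_mulVec, ← Matrix.mul_assoc, (mem_orthogonalGroup_iff' m ℝ).1 hQ, mulVec_smul]
      using congrArg (Qᵀ *ᵥ ·) h
  · intro h
    simpa [mulVec_mulVec, ← Matrix.mul_assoc, (mem_orthogonalGroup_iff m ℝ).1 hQ, mulVec_smul]
      using congrArg (Q *ᵥ ·) h

namespace IsSpectralProj

variable {m : Type*} [Fintype m] [DecidableEq m] {A E F : Matrix m m ℝ} {θ : ℝ}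

theorem mul_eq_right (hE : IsSpectralProj A θ E) (hF : IsSpectralProj A θ F) : F * E = E := by
  refine Matrix.ext_of_mulVec_single fun j => ?_
  have hEE : E *ᵥ (E *ᵥ Pi.single j 1) = E *ᵥ Pi.single j 1 := by rw [mulVec_mulVec, hE.2.1]
  rw [← mulVec_mulVec]
  exact (hF.2.2 _).1 ((hE.2.2 _).2 hEE)

theorem unique (hE : IsSpectralProj A θ E) (hF : IsSpectralProj A θ F) : E = F := by
  have h := congrArg transpose (hE.mul_eq_right hF)
  rwa [transpose_mul, hE.1, hF.1, hF.mul_eq_right hE, eq_comm] at h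

theorem neg (hE : IsSpectralProj A θ E) : IsSpectralProj (-A) (-θ) E :=
  ⟨hE.1, hE.2.1, fun v => by rw [neg_mulVec, neg_smul, neg_inj, hE.2.2]⟩

theorem conj {Q : Matrix m m ℝ} (hQ : Q ∈ orthogonalGroup m ℝ) (hE : IsSpectralProj A θ E) :
    IsSpectralProj (Q * A * Qᵀ) θ (Q * E * Qᵀ) := by
  refine ⟨?_, ?_, fun v => ?_⟩
  · simp [IsSymm, transpose_mul, hE.1.eq, Matrix.mul_assoc]
  · calc Q * E * Qᵀ * (Q * E * Qᵀ) = Q * (E * (Qᵀ * Q) * E) * Qᵀ := by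
          simp only [Matrix.mul_assoc]
      _ = Q * E * Qᵀ := by
          rw [(mem_orthogonalGroup_iff' m ℝ).1 hQ, Matrix.mul_one, hE.2.1, Matrix.mul_assoc]
  · have hEv := conj_mulVec_eq_smul_iff (M := E) hQ 1 v
    rw [one_smul, one_smul] at hEv
    rw [conj_mulVec_eq_smul_iff hQ, hE.2.2, hEv]

theorem apply_self_neg_eq {d : m → ℝ} (hd : ∀ i, d i = 1 ∨ d i = -1)
    (hbip : diagonal d * A * diagonal d = -A) (hE : IsSpectralProj A θ E)
    (hF : IsSpectralProj A (-θ) F) (u : m) : F u u = E u u := by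
  have hd2 : ∀ i, d i * d i = 1 := fun i => by rcases hd i with h | h <;> simp [h]
  have hS : diagonal d ∈ orthogonalGroup m ℝ := by
    rw [mem_orthogonalGroup_iff, diagonal_transpose, diagonal_mul_diagonal, ← diagonal_one]
    exact congrArg diagonal (funext hd2)
  have h := (hE.conj hS).neg
  rw [diagonal_transpose, hbip, neg_neg] at h
  rw [hF.unique h, mul_diagonal, diagonal_mul, mul_right_comm, hd2, one_mul]

end IsSpectralProj

theorem Fintype.sum_comp_mul_eq_sum_fiberwise {ι κ R : Type*} [Fintype ι] [DecidableEq κ]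
    [CommSemiring R] (g : ι → κ) (T : Finset κ) {c : ι → R} (hc : ∀ i, g i ∉ T → c i = 0)
    (f : κ → R) : ∑ i, f (g i) * c i = ∑ k ∈ T, f k * ∑ i with g i = k, c i := by
  calc ∑ i, f (g i) * c i = ∑ i, ∑ k ∈ T, if g i = k then f k * c i else 0 := by
        refine Finset.sum_congr rfl fun i _ => ?_
        rw [Finset.sum_ite_eq]
        split_ifs with h
        · rfl
        · rw [hc i h, mul_zero]
    _ = ∑ k ∈ T, f k * ∑ i with g i = k, c i := by
        rw [Finset.sum_comm]
        simp [Finset.mul_sum, Finset.sum_filter]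

section Diagonalization

variable {m : Type*} [Fintype m] [DecidableEq m]

theorem Matrix.IsSymm.exists_orthogonal_diagonalization {A : Matrix m m ℝ} (hA : A.IsSymm) :
    ∃ Q ∈ orthogonalGroup m ℝ, ∃ μ : m → ℝ, A = Q * diagonal μ * Qᵀ := by
  have hA' : A.IsHermitian := isHermitian_iff_isSymm.2 hA
  refine ⟨hA'.eigenvectorUnitary, hA'.eigenvectorUnitary.2, hA'.eigenvalues, ?_⟩
  conv_lhs => rw [hA'.spectral_theorem]
  rfl

theorem isSpectralProj_diagonal (μ : m → ℝ) (θ : ℝ) :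
    IsSpectralProj (diagonal μ) θ (diagonal fun i => if μ i = θ then 1 else 0) := by
  refine ⟨isSymm_diagonal _, by simp [diagonal_mul_diagonal], fun v => ?_⟩
  simp only [mulVec_diagonal, funext_iff, Pi.smul_apply, smul_eq_mul]
  refine forall_congr' fun i => ?_
  by_cases h : μ i = θ <;> simp [h, mul_eq_mul_right_iff, eq_comm (a := (0 : ℝ))]

noncomputable def eigenProj (Q : Matrix m m ℝ) (μ : m → ℝ) (θ : ℝ) : Matrix m m ℝ :=
  Q * diagonal (fun i => if μ i = θ then 1 else 0) * Qᵀ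

theorem isSpectralProj_eigenProj {Q : Matrix m m ℝ} (hQ : Q ∈ orthogonalGroup m ℝ) (μ : m → ℝ)
    (θ : ℝ) : IsSpectralProj (Q * diagonal μ * Qᵀ) θ (eigenProj Q μ θ) :=
  (isSpectralProj_diagonal μ θ).conj hQ

theorem eigenProj_apply_self (Q : Matrix m m ℝ) (μ : m → ℝ) (θ : ℝ) (u : m) :
    eigenProj Q μ θ u u = ∑ i with μ i = θ, Q u i ^ 2 := by
  rw [eigenProj, mul_apply, Finset.sum_filter]
  simp [mul_diagonal, sq]

theorem transition_conj_diagonal {Q : Matrix m m ℝ} (hQ : Q ∈ orthogonalGroup m ℝ) (μ : m → ℝ)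
    (t : ℝ) :
    transition (Q * diagonal μ * Qᵀ) t =
      Q.map (↑) * diagonal (fun i => Complex.exp (Complex.I * t * μ i)) * (Q.map (↑))ᵀ := by
  set Qc : Matrix m m ℂ := Q.map (↑)
  have hQc : Qcᵀ * Qc = 1 := by
    have h := congrArg (Matrix.map · Complex.ofRealHom) ((mem_orthogonalGroup_iff' m ℝ).1 hQ)
    simp only [Matrix.map_mul, transpose_map, map_zero, map_one, Matrix.map_one] at h
    exact h
  have hinv : Qc⁻¹ = Qcᵀ := inv_eq_left_inv hQc
  have hunit : IsUnit Qc := (isUnit_iff_isUnit_det _).2 (isUnit_det_of_left_inverse hQc)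
  have hconj : (Complex.I * t) • (Q * diagonal μ * Qᵀ).map (↑) =
      Qc * diagonal (fun i => Complex.I * t * μ i) * Qc⁻¹ := by
    change (Complex.I * t) • (Q * diagonal μ * Qᵀ).map Complex.ofRealHom = _
    rw [Matrix.map_mul, Matrix.map_mul, diagonal_map (map_zero _), transpose_map, hinv,
      ← smul_mul_assoc, ← mul_smul_comm, ← diagonal_smul]
    rfl
  rw [transition, hconj, exp_conj _ _ hunit, exp_diagonal, hinv]
  congr
  ext i
  simp [Complex.exp_eq_exp_ℂ]

theorem transition_conj_diagonal_apply_self {Q : Matrix m m ℝ} (hQ : Q ∈ orthogonalGroup m ℝ)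
    (μ : m → ℝ) (t : ℝ) (u : m) :
    transition (Q * diagonal μ * Qᵀ) t u u =
      ∑ i, Complex.exp (Complex.I * t * μ i) * (Q u i ^ 2 : ℝ) := by
  rw [transition_conj_diagonal hQ, mul_apply]
  simp [mul_diagonal, sq, mul_comm, mul_left_comm]

end Diagonalization

theorem transition_zero {m : Type*} [Fintype m] [DecidableEq m] (A : Matrix m m ℝ) :
    transition A 0 = 1 := by
  simp [transition]

namespace Matrix.IsSymm

variable {m : Type*} [Fintype m] [DecidableEq m] {A : Matrix m m ℝ}

theorem exists_isSpectralProj (hA : A.IsSymm) :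
    ∃ E : ℝ → Matrix m m ℝ, ∀ θ, IsSpectralProj A θ (E θ) := by
  obtain ⟨Q, hQ, μ, rfl⟩ := hA.exists_orthogonal_diagonalization
  exact ⟨eigenProj Q μ, isSpectralProj_eigenProj hQ μ⟩

theorem transition_apply_self_eq_sum (hA : A.IsSymm) {E : ℝ → Matrix m m ℝ}
    (hE : ∀ θ, IsSpectralProj A θ (E θ)) {u : m} {T : Finset ℝ} (hT : ∀ θ ∉ T, E θ u u = 0)
    (t : ℝ) : transition A t u u = ∑ θ ∈ T, Complex.exp (Complex.I * t * θ) * E θ u u := by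
  obtain ⟨Q, hQ, μ, rfl⟩ := hA.exists_orthogonal_diagonalization
  have hEQ : ∀ θ, E θ u u = ∑ i with μ i = θ, Q u i ^ 2 := fun θ => by
    rw [(hE θ).unique (isSpectralProj_eigenProj hQ μ θ), eigenProj_apply_self]
  have hQu : ∀ i, μ i ∉ T → Q u i ^ 2 = 0 := fun i hi => by
    have h := hEQ (μ i) ▸ hT (μ i) hi
    exact (Finset.sum_eq_zero_iff_of_nonneg (fun j _ => sq_nonneg (Q u j))).1 h i (by simp)
  rw [transition_conj_diagonal_apply_self hQ]
  refine (Fintype.sum_comp_mul_eq_sum_fiberwise μ T (c := fun i => ((Q u i ^ 2 : ℝ) : ℂ))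
    (fun i hi => by simp [hQu i hi]) fun θ => Complex.exp (Complex.I * t * θ)).trans ?_
  simp [hEQ]

theorem transition_apply_self_eq_cos (hA : A.IsSymm) {E : ℝ → Matrix m m ℝ}
    (hE : ∀ θ, IsSpectralProj A θ (E θ)) {u : m} {lam : ℝ} (hlam : lam ≠ 0)
    (hsymm : E (-lam) u u = E lam u u) (hT : ∀ θ ∉ ({0, lam, -lam} : Finset ℝ), E θ u u = 0)
    (t : ℝ) : transition A t u u = ↑(E 0 u u + 2 * E lam u u * Real.cos (t * lam)) := by
  have h2cos : Complex.exp (Complex.I * t * lam) + Complex.exp (Complex.I * t * (-lam : ℝ)) =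
      2 * (Real.cos (t * lam) : ℂ) := by
    push_cast
    rw [Complex.two_cos]
    ring_nf
  rw [hA.transition_apply_self_eq_sum hE hT t, Finset.sum_insert (by simp [hlam, hlam.symm]),
    Finset.sum_insert (by simpa using fun h => hlam (by linarith)), Finset.sum_singleton, hsymm,
    Complex.ofReal_zero, mul_zero, Complex.exp_zero, one_mul]
  push_cast at h2cos ⊢
  linear_combination (E lam u u : ℂ) * h2cos

end Matrix.IsSymm

theorem Function.Even.eq_zero_of_forall_pos_ne {M : Type*} [Zero M] {w : ℝ → M}
    (hw : Function.Even w) {lam : ℝ} (hpos : ∀ θ, 0 < θ → θ ≠ lam → w θ = 0) :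
    ∀ θ ∉ ({0, lam, -lam} : Finset ℝ), w θ = 0 := by
  intro θ hθ
  simp only [Finset.mem_insert, Finset.mem_singleton, not_or] at hθ
  obtain ⟨hθ0, hθlam, hθnlam⟩ := hθ
  rcases lt_or_gt_of_ne hθ0 with hθ | hθ
  · rw [← hw, hpos (-θ) (neg_pos.2 hθ) fun h => hθnlam (by linarith)]
  · exact hpos θ hθ hθlam

theorem iInf_norm_eq_zero_of_eq_zero {ι E : Type*} [SeminormedAddGroup E] {f : ι → E} {i : ι}
    (hi : f i = 0) : ⨅ j, ‖f j‖ = 0 :=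
  have : Nonempty ι := ⟨i⟩
  le_antisymm ((ciInf_le ⟨0, by rintro _ ⟨j, rfl⟩; exact norm_nonneg _⟩ i).trans_eq (by simp [hi]))
    (le_ciInf fun _ => norm_nonneg _)

theorem stmt15_general {n : ℕ} (A : Matrix (Fin n) (Fin n) ℝ) (hA : A.IsSymm)
    (d : Fin n → ℝ) (hd : ∀ i, d i = 1 ∨ d i = -1)
    (S : Matrix (Fin n) (Fin n) ℝ) (hS : S = Matrix.diagonal d)
    (hbip : S * A * S = -A)
    (u : Fin n)
    (E0 : Matrix (Fin n) (Fin n) ℝ) (hE0 : IsSpectralProj A 0 E0)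
    (hlt : E0 u u < 1 / 2)
    (lam : ℝ) (hlam : 0 < lam)
    (huniq : ∀ μ : ℝ, 0 < μ → μ ≠ lam →
      ∀ F : Matrix (Fin n) (Fin n) ℝ, IsSpectralProj A μ F →
        F.mulVec (Pi.single u 1) = 0) :
    ((transition A (Real.pi / lam) u u).im = 0 ∧
      (transition A (Real.pi / lam) u u).re < 0) ∧
    (⨅ t : {t : ℝ // 0 < t}, ‖transition A t u u‖) = 0 := by
  subst hS
  obtain ⟨E, hE⟩ := hA.exists_isSpectralProj
  have heven : Function.Even fun θ => E θ u u := fun θ =>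
    (hE θ).apply_self_neg_eq hd hbip (hE (-θ)) u
  have hpos : ∀ θ, 0 < θ → θ ≠ lam → E θ u u = 0 := fun θ hθ hθlam => by
    simpa [mulVec_single] using congrFun (huniq θ hθ hθlam _ (hE θ)) u
  have htrans := hA.transition_apply_self_eq_cos hE hlam.ne' (heven lam)
    (heven.eq_zero_of_forall_pos_ne hpos)
  have hab : E 0 u u + 2 * E lam u u = 1 := by
    simpa [transition_zero] using (congrArg Complex.re (htrans 0)).symm
  rw [hE0.unique (hE 0)] at hlt
  have hcos : Real.cos (Real.pi / lam * lam) = -1 := by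
    rw [div_mul_cancel₀ _ hlam.ne', Real.cos_pi]
  obtain ⟨t, ht, ht0⟩ : ∃ t ∈ Set.Ioo 0 (Real.pi / lam),
      E 0 u u + 2 * E lam u u * Real.cos (t * lam) = 0 :=
    intermediate_value_Ioo' (div_pos Real.pi_pos hlam).le (by fun_prop)
      ⟨by rw [hcos]; linarith, by simp [hab]⟩
  refine ⟨?_, iInf_norm_eq_zero_of_eq_zero (i := ⟨t, ht.1⟩) (by simp [htrans, ht0])⟩
  rw [htrans, hcos]
  exact ⟨Complex.ofReal_im _, by simp only [Complex.ofReal_re]; linarith⟩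

/-- for a bipartite real symmetric matrix `A` and a vertex `u` with
`E₀·e_u ≠ 0`, `(E₀)_{u,u} < 1/2`, and exactly one positive eigenvalue `λ₀` in the
eigenvalue support of `u`, the entry `exp(i(π/λ₀)A)_{u,u}` is a negative real number and
`u` is not sedentary. -/
theorem stmt15 {n : ℕ} (A : Matrix (Fin n) (Fin n) ℝ) (hA : A.IsSymm)
    (d : Fin n → ℝ) (hd : ∀ i, d i = 1 ∨ d i = -1)
    (S : Matrix (Fin n) (Fin n) ℝ) (hS : S = Matrix.diagonal d)
    (hbip : S * A * S = -A)
    (u : Fin n)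
    (E0 : Matrix (Fin n) (Fin n) ℝ) (hE0 : IsSpectralProj A 0 E0)
    (hsupp0 : E0.mulVec (Pi.single u 1) ≠ 0)
    (hlt : E0 u u < 1 / 2)
    (lam : ℝ) (hlam : 0 < lam)
    (Elam : Matrix (Fin n) (Fin n) ℝ) (hElam : IsSpectralProj A lam Elam)
    (hsupplam : Elam.mulVec (Pi.single u 1) ≠ 0)
    (huniq : ∀ μ : ℝ, 0 < μ → μ ≠ lam →
      ∀ F : Matrix (Fin n) (Fin n) ℝ, IsSpectralProj A μ F →
        F.mulVec (Pi.single u 1) = 0) :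
    ((transition A (Real.pi / lam) u u).im = 0 ∧
      (transition A (Real.pi / lam) u u).re < 0) ∧
    (⨅ t : {t : ℝ // 0 < t}, ‖transition A t u u‖) = 0 :=
  stmt15_general A hA d hd S hS hbip u E0 hE0 hlt lam hlam huniq
end
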